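/- arXiv:1404.0818 — 5 statements merged into one kernel-verified Lean document; each statement's English description precedes it below -/
import Mathlib

section
/- Fix a positive integer k and set τ = 6k, ρ = τ + 2(k−1)·C(τ,2), and ζ = ρ + 2k·C(ρ,k+1)². Let H be a finite connected graph that is k-complemented and has treewidth less than k, and let S ⊆ V(H) satisfy: (a) ∅ ≠ S ⊊ V(H); (b) |S| ≤ ρ; (c) S does not induce a clique in H; (d) H ∖ S is connected; (e) S = N_H(V(H) ∖ S). Then there exists a set X ⊆ V(H) such that: (i) X is a proper superset of S; (ii) |X| ≤ ζ; (iii) for every connected component of H ∖ X with vertex set Z, one has |N_H(Z)| ≤ ρ. -/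
/-!
Common definitions: separations, stable separations, the improved graph,
external neighbourhoods, connected components, clique separations, and
rooted tree decompositions together with treewidth.
-/

section Defs

variable {V : Type} [Fintype V] [DecidableEq V]

/-- A separation of a graph `G`: a pair `(A, B)` covering the vertex set with no
edge between `A \ B` and `B \ A`.  Its order is `(A ∩ B).card`. -/
def IsSeparation (G : SimpleGraph V) (A B : Finset V) : Prop :=
  A ∪ B = Finset.univ ∧ ∀ a ∈ A, a ∉ B → ∀ b ∈ B, b ∉ A → ¬G.Adj a b

/-- An `X`–`Y` separation: a separation `(A, B)` with `X ⊆ A` and `Y ⊆ B`. -/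
def IsSepFor (G : SimpleGraph V) (X Y A B : Finset V) : Prop :=
  IsSeparation G A B ∧ X ⊆ A ∧ Y ⊆ B

/-- An `X`–`Y` separation of minimum possible order. -/
def IsMinSepFor (G : SimpleGraph V) (X Y A B : Finset V) : Prop :=
  IsSepFor G X Y A B ∧ ∀ A' B', IsSepFor G X Y A' B' → (A ∩ B).card ≤ (A' ∩ B').card

/-- A separation `(A, B)` is `S`-stable if it is a minimum-order `S_L`–`S_R`
separation for some partition `(S_L, S_R)` of `S`. -/
def IsStable (G : SimpleGraph V) (S A B : Finset V) : Prop :=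
  ∃ SL SR, Disjoint SL SR ∧ SL ∪ SR = S ∧ IsMinSepFor G SL SR A B

/-- `conn_G(x, y) < k`: there is a separation of order `< k` with `x ∈ A ∖ B` and
`y ∈ B ∖ A`.  (For adjacent `x, y` no such separation exists, i.e. `conn = +∞`.) -/
def ConnLt (G : SimpleGraph V) (x y : V) (k : ℕ) : Prop :=
  ∃ A B, IsSeparation G A B ∧ x ∈ A ∧ x ∉ B ∧ y ∈ B ∧ y ∉ A ∧ (A ∩ B).card < k

/-- A graph is `k`-complemented when `conn(x,y) ≥ k` implies that `x` and `y` are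
adjacent; equivalently, any two distinct nonadjacent vertices are separated by a
separation of order `< k`. -/
def KComplemented (G : SimpleGraph V) (k : ℕ) : Prop :=
  ∀ x y, x ≠ y → ¬G.Adj x y → ConnLt G x y k

lemma IsSeparation.symm2 {G : SimpleGraph V} {A B : Finset V} (h : IsSeparation G A B) :
    IsSeparation G B A :=
  ⟨by rw [Finset.union_comm]; exact h.1,
   fun a ha ha' b hb hb' hadj => h.2 b hb hb' a ha ha' hadj.symm⟩

/-- The `k`-improved graph `G^{(k)}`: same vertices, and `xy` is an edge
iff `conn_G(x,y) ≥ k` (in particular all edges of `G` are kept). -/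
def improvedGraph (G : SimpleGraph V) (k : ℕ) : SimpleGraph V where
  Adj x y := x ≠ y ∧ ¬ConnLt G x y k
  symm := ⟨by
    rintro x y ⟨hxy, h⟩
    refine ⟨hxy.symm, ?_⟩
    rintro ⟨A, B, hsep, hy, hy', hx, hx', hc⟩
    exact h ⟨B, A, hsep.symm2, hx, hx', hy, hy', by rwa [Finset.inter_comm]⟩⟩
  loopless := ⟨fun x h => h.1 rfl⟩

/-- The external neighbourhood `N_G(Z)`: vertices outside `Z` with a neighbour in `Z`. -/
def extNbhd (G : SimpleGraph V) (Z : Set V) : Set V :=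
  {v | v ∉ Z ∧ ∃ z ∈ Z, G.Adj v z}

/-- `Z` is the vertex set of a connected component of `G - X`: it is disjoint from `X`,
induces a connected subgraph, and all its neighbours outside itself lie in `X`. -/
def IsCompAway (G : SimpleGraph V) (X Z : Set V) : Prop :=
  Disjoint Z X ∧ (G.induce Z).Connected ∧
    ∀ ⦃v z : V⦄, z ∈ Z → G.Adj v z → v ∉ Z → v ∈ X

/-- The subgraph of `G` induced on `W` admits no clique separation: there is no
separation `(A, B)` of `G[W]` with `A ∖ B ≠ ∅`, `B ∖ A ≠ ∅` and `A ∩ B` a clique. -/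
def CliqueSepFreeOn (G : SimpleGraph V) (W : Finset V) : Prop :=
  ¬∃ A B : Finset V, A ∪ B = W ∧
      (∀ a ∈ A, a ∉ B → ∀ b ∈ B, b ∉ A → ¬G.Adj a b) ∧
      (A \ B).Nonempty ∧ (B \ A).Nonempty ∧ G.IsClique (↑(A ∩ B) : Set V)

/-- A rooted tree decomposition of the subgraph of `G` induced on `W`.
The rooted tree is given by a finite node type with a parent function
(every node reaches the root by iterating `parent`);
for every vertex of `W` the nodes whose bags contain it form a nonempty connected
subtree, and every edge of `G[W]` lies inside some bag. -/
structure RTDOn (V : Type) [Fintype V] [DecidableEq V] (G : SimpleGraph V) (W : Finset V) where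
  ι : Type
  instFintype : Fintype ι
  instDecEq : DecidableEq ι
  root : ι
  parent : ι → ι
  parent_root : parent root = root
  reaches_root : ∀ t, ∃ n, parent^[n] t = root
  bag : ι → Finset V
  bag_subset : ∀ t, bag t ⊆ W
  bags_connected : ∀ v ∈ W,
    ((SimpleGraph.fromRel fun s t => parent s = t).induce {t | v ∈ bag t}).Connected
  edge_in_bag : ∀ u ∈ W, ∀ v ∈ W, G.Adj u v → ∃ t, u ∈ bag t ∧ v ∈ bag t

/-- A rooted tree decomposition of `G`. -/
abbrev RTD (V : Type) [Fintype V] [DecidableEq V] (G : SimpleGraph V) : Type 1 :=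
  RTDOn V G Finset.univ

namespace RTDOn

variable {G : SimpleGraph V} {W : Finset V}

instance (D : RTDOn V G W) : Fintype D.ι := D.instFintype
instance (D : RTDOn V G W) : DecidableEq D.ι := D.instDecEq

/-- The decomposition has width at most `w`, i.e. all bags have size at most `w + 1`. -/
def widthLe (D : RTDOn V G W) (w : ℕ) : Prop := ∀ t, (D.bag t).card ≤ w + 1

/-- The decomposition has adhesion width at most `ℓ`: for every tree edge
`(t, parent t)` the intersection of the two bags has size at most `ℓ`. -/
def adhesionLe (D : RTDOn V G W) (l : ℕ) : Prop :=
  ∀ t, t ≠ D.root → (D.bag t ∩ D.bag (D.parent t)).card ≤ l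

/-- A family of potential bags captures a decomposition if every bag belongs to it. -/
def captures (D : RTDOn V G W) (ℬ : Finset (Finset V)) : Prop := ∀ t, D.bag t ∈ ℬ

/-- `γ(t)`: union of the bags at all descendants of `t`. -/
def gammaSet (D : RTDOn V G W) (t : D.ι) : Set V :=
  {v | ∃ s, (∃ n, D.parent^[n] s = t) ∧ v ∈ D.bag s}

/-- `σ(t)`: the adhesion of `t` with its parent (empty at the root). -/
def sigmaBag (D : RTDOn V G W) (t : D.ι) : Finset V :=
  if t = D.root then ∅ else D.bag t ∩ D.bag (D.parent t)

/-- `α(t) = γ(t) ∖ σ(t)`. -/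
def alphaSet (D : RTDOn V G W) (t : D.ι) : Set V := D.gammaSet t \ ↑(D.sigmaBag t)

end RTDOn

/-- A rooted tree decomposition is connectivity-sensitive when every `G[α(t)]`
is connected and `σ(t) = N_G(α(t))`. -/
def IsCSDecomp {G : SimpleGraph V} (D : RTD V G) : Prop :=
  ∀ t, (G.induce (D.alphaSet t)).Connected ∧ extNbhd G (D.alphaSet t) = ↑(D.sigmaBag t)

/-- The treewidth of `G`: the least `w` such that `G` has a (rooted) tree
decomposition of width at most `w`. -/
noncomputable def treewidth (G : SimpleGraph V) : ℕ :=
  sInf {w : ℕ | ∃ D : RTD V G, D.widthLe w}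

/-- `ℬ^{≤q}`: all sets of size at most `q` contained in some member of `ℬ`. -/
def belowFam (ℬ : Finset (Finset V)) (q : ℕ) : Finset (Finset V) :=
  Finset.univ.filter fun X => X.card ≤ q ∧ ∃ B ∈ ℬ, X ⊆ B

end Defs

/-!
A tree decomposition whose bags have at most `k` vertices yields balanced separators: for every
set `X₀` of at least `6k + 2` vertices there is a separation `(A, B)` of order at most `k` with at
least `k + 1` vertices of `X₀` on each strict side. Pick `v₀ ∉ S` and put `X₀ = S ∪ {v₀}`.
If `|X₀| ≤ ρ`, then `X = X₀` works. Otherwise `|X₀| = ρ + 1 ≥ 6k + 2` (when `k ≥ 2`), and we take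
`X = X₀ ∪ (A ∩ B)`: a component of `H - X` is connected and avoids `A ∩ B`, so it lies on one
side and has no neighbour among the `k + 1` vertices of `X₀` strictly on the other side; hence it
has at most `|X| - (k + 1) ≤ ρ` neighbours. When `k = 1` the bags are singletons and `H` has no
edges at all.
-/

open Finset

namespace RTDOn

variable {V : Type} [Fintype V] [DecidableEq V] {G : SimpleGraph V} {W : Finset V}
  (D : RTDOn V G W)

def IsDescendant (s t : D.ι) : Prop := ∃ n, D.parent^[n] s = t

def children (t : D.ι) : Finset D.ι := univ.filter fun c => D.parent c = t ∧ c ≠ t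

variable {D}

lemma mem_children {c t : D.ι} : c ∈ D.children t ↔ D.parent c = t ∧ c ≠ t := by
  simp [children]

lemma IsDescendant.refl (t : D.ι) : D.IsDescendant t t := ⟨0, rfl⟩

lemma IsDescendant.trans {s t u : D.ι} (hst : D.IsDescendant s t) (htu : D.IsDescendant t u) :
    D.IsDescendant s u := by
  obtain ⟨m, rfl⟩ := hst
  obtain ⟨n, rfl⟩ := htu
  exact ⟨n + m, Function.iterate_add_apply _ _ _ _⟩

lemma isDescendant_parent (s : D.ι) : D.IsDescendant s (D.parent s) := ⟨1, rfl⟩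

lemma IsDescendant.parent_of_ne {s c : D.ι} (h : D.IsDescendant s c) (hsc : s ≠ c) :
    D.IsDescendant (D.parent s) c := by
  obtain ⟨_ | n, hn⟩ := h
  · exact absurd hn hsc
  · exact ⟨n, hn⟩

lemma IsDescendant.total {s a b : D.ι} (ha : D.IsDescendant s a) (hb : D.IsDescendant s b) :
    D.IsDescendant a b ∨ D.IsDescendant b a := by
  obtain ⟨m, rfl⟩ := ha
  obtain ⟨n, rfl⟩ := hb
  rcases le_total m n with h | h
  · exact Or.inl ⟨n - m, by rw [← Function.iterate_add_apply, Nat.sub_add_cancel h]⟩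
  · exact Or.inr ⟨m - n, by rw [← Function.iterate_add_apply, Nat.sub_add_cancel h]⟩

lemma eq_root_of_iterate_parent_eq {t : D.ι} {n : ℕ} (h : D.parent^[n + 1] t = t) :
    t = D.root := by
  obtain ⟨m, hm⟩ := D.reaches_root t
  have hmn : m ≤ (n + 1) * m := Nat.le_mul_of_pos_left m n.succ_pos
  calc t = D.parent^[(n + 1) * m] t := ((Function.IsPeriodicPt.mul_const h m).eq).symm
    _ = D.parent^[(n + 1) * m - m] (D.parent^[m] t) := by
      rw [← Function.iterate_add_apply, Nat.sub_add_cancel hmn]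
    _ = D.root := by rw [hm, Function.iterate_fixed D.parent_root]

lemma not_isDescendant_of_mem_children {c t : D.ι} (hc : c ∈ D.children t) :
    ¬D.IsDescendant t c := by
  rintro ⟨n, hn⟩
  obtain ⟨hct, hne⟩ := mem_children.1 hc
  have hroot : c = D.root := eq_root_of_iterate_parent_eq (n := n) (by
    rw [Function.iterate_succ_apply, hct, hn])
  exact hne (by rw [← hct, hroot, D.parent_root])

lemma not_isDescendant_of_mem_children_of_ne {c c' s t : D.ι} (hc : c ∈ D.children t)
    (hc' : c' ∈ D.children t) (hne : c ≠ c') (hs : D.IsDescendant s c) :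
    ¬D.IsDescendant s c' := by
  intro hs'
  rcases hs.total hs' with h | h
  · exact not_isDescendant_of_mem_children hc' ((mem_children.1 hc).1 ▸ h.parent_of_ne hne)
  · exact not_isDescendant_of_mem_children hc ((mem_children.1 hc').1 ▸ h.parent_of_ne hne.symm)

lemma exists_mem_children_isDescendant {s t : D.ι} (h : D.IsDescendant s t) (hst : s ≠ t) :
    ∃ c ∈ D.children t, D.IsDescendant s c := by
  obtain ⟨n, hn⟩ := h
  induction n generalizing s with
  | zero => exact absurd hn hst
  | succ n ih =>
    by_cases hs : D.parent s = t
    · exact ⟨s, mem_children.2 ⟨hs, hst⟩, IsDescendant.refl s⟩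
    · obtain ⟨c, hc, hsc⟩ := ih hs hn
      exact ⟨c, hc, (isDescendant_parent s).trans hsc⟩

lemma exists_forall_children_not {P : D.ι → Prop} (h : ∃ t, P t) :
    ∃ t, P t ∧ ∀ c ∈ D.children t, ¬P c := by
  classical
  let size (t : D.ι) : ℕ := (univ.filter (D.IsDescendant · t)).card
  obtain ⟨t₀, ht₀⟩ := h
  obtain ⟨t, ht, hmin⟩ := exists_min_image (univ.filter P) size
    ⟨t₀, mem_filter.2 ⟨mem_univ _, ht₀⟩⟩
  refine ⟨t, (mem_filter.1 ht).2, fun c hc hPc => ?_⟩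
  have hsub : univ.filter (D.IsDescendant · c) ⊆ univ.filter (D.IsDescendant · t) :=
    fun s => by
      simpa using fun hs : D.IsDescendant s c =>
        (mem_children.1 hc).1 ▸ hs.trans (isDescendant_parent c)
  have hlt : size c < size t := card_lt_card <| (ssubset_iff_of_subset hsub).2
    ⟨t, by simpa using IsDescendant.refl t,
      by simpa using not_isDescendant_of_mem_children hc⟩
  exact absurd (hmin c (mem_filter.2 ⟨mem_univ _, hPc⟩)) (not_le.2 hlt)

lemma exists_mem_bag {v : V} (hv : v ∈ W) : ∃ t, v ∈ D.bag t :=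
  let ⟨⟨t, ht⟩⟩ := (D.bags_connected v hv).nonempty; ⟨t, ht⟩

lemma mem_bag_parent_of_mem_bag {v : V} (hv : v ∈ W) {c s₁ s₂ : D.ι}
    (h₁ : v ∈ D.bag s₁) (hs₁ : D.IsDescendant s₁ c)
    (h₂ : v ∈ D.bag s₂) (hs₂ : ¬D.IsDescendant s₂ c) : v ∈ D.bag (D.parent c) := by
  obtain ⟨p⟩ := (D.bags_connected v hv).preconnected ⟨s₁, h₁⟩ ⟨s₂, h₂⟩
  obtain ⟨d, -, hin, hout⟩ := p.exists_boundary_dart {x | D.IsDescendant x c} hs₁ hs₂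
  have hadj : (SimpleGraph.fromRel fun s t => D.parent s = t).Adj d.fst d.snd := d.adj
  obtain ⟨-, hpar | hpar⟩ := (SimpleGraph.fromRel_adj _ _ _).1 hadj
  · by_cases hc : (d.fst : D.ι) = c
    · simpa [← hpar, hc] using d.snd.2
    · exact absurd (show D.IsDescendant d.snd c from hpar ▸ hin.parent_of_ne hc) hout
  · exact absurd ((isDescendant_parent _).trans (hpar ▸ hin)) hout

open Classical in
noncomputable def gammaFinset (t : D.ι) : Finset V := univ.filter (· ∈ D.gammaSet t)

lemma mem_gammaFinset {v : V} {t : D.ι} :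
    v ∈ D.gammaFinset t ↔ ∃ s, D.IsDescendant s t ∧ v ∈ D.bag s := by
  simp only [gammaFinset, mem_filter, mem_univ, true_and]
  rfl

lemma gammaFinset_subset (t : D.ι) :
    D.gammaFinset t ⊆ D.bag t ∪ (D.children t).biUnion D.gammaFinset := by
  intro v hv
  obtain ⟨s, hst, hv⟩ := mem_gammaFinset.1 hv
  by_cases hs : s = t
  · exact mem_union_left _ (hs ▸ hv)
  · obtain ⟨c, hc, hsc⟩ := exists_mem_children_isDescendant hst hs
    exact mem_union_right _ (mem_biUnion.2 ⟨c, hc, mem_gammaFinset.2 ⟨s, hsc, hv⟩⟩)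

lemma disjoint_gammaFinset_sdiff_bag {t c c' : D.ι} (hc : c ∈ D.children t)
    (hc' : c' ∈ D.children t) (hne : c ≠ c') :
    Disjoint (D.gammaFinset c \ D.bag t) (D.gammaFinset c' \ D.bag t) := by
  refine disjoint_left.2 fun v hv hv' => (mem_sdiff.1 hv).2 ?_
  obtain ⟨s, hs, hvs⟩ := mem_gammaFinset.1 (mem_sdiff.1 hv).1
  obtain ⟨s', hs', hvs'⟩ := mem_gammaFinset.1 (mem_sdiff.1 hv').1
  exact (mem_children.1 hc).1 ▸ mem_bag_parent_of_mem_bag (D.bag_subset s hvs) hvs hs hvs'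
    (not_isDescendant_of_mem_children_of_ne hc' hc hne.symm hs')

lemma card_inter_gammaFinset_le (X : Finset V) (t : D.ι) :
    (X ∩ D.gammaFinset t).card ≤
      (D.bag t).card + ∑ c ∈ D.children t, (X ∩ (D.gammaFinset c \ D.bag t)).card := by
  have hsub : X ∩ D.gammaFinset t ⊆
      D.bag t ∪ (D.children t).biUnion fun c => X ∩ (D.gammaFinset c \ D.bag t) := by
    intro v hv
    obtain ⟨hvX, hvt⟩ := mem_inter.1 hv
    by_cases hbag : v ∈ D.bag t
    · exact mem_union_left _ hbag
    obtain ⟨c, hc, hvc⟩ :=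
      mem_biUnion.1 ((mem_union.1 (D.gammaFinset_subset t hvt)).resolve_left hbag)
    exact mem_union_right _ (mem_biUnion.2 ⟨c, hc, mem_inter.2 ⟨hvX, mem_sdiff.2 ⟨hvc, hbag⟩⟩⟩)
  exact (card_le_card hsub).trans
    ((card_union_le _ _).trans (Nat.add_le_add_left card_biUnion_le _))

end RTDOn

lemma exists_subset_lt_sum_le_add {ι : Type*} [DecidableEq ι] {s : Finset ι} {a : ι → ℕ}
    {b M : ℕ} (ha : ∀ i ∈ s, a i ≤ M) (hs : b < ∑ i ∈ s, a i) :
    ∃ t ⊆ s, b < ∑ i ∈ t, a i ∧ ∑ i ∈ t, a i ≤ b + M := by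
  induction s using Finset.induction_on with
  | empty => simp at hs
  | insert i s hi ih =>
    by_cases hb : b < ∑ j ∈ s, a j
    · obtain ⟨t, hts, ht⟩ := ih (fun j hj => ha j (mem_insert_of_mem hj)) hb
      exact ⟨t, hts.trans (subset_insert i s), ht⟩
    · refine ⟨insert i s, subset_rfl, hs, ?_⟩
      rw [sum_insert hi]
      have := ha i (mem_insert_self i s)
      omega

lemma le_card_inter_sdiff_of_union_eq_univ {V : Type} [Fintype V] [DecidableEq V]
    {A B T X : Finset V} {k : ℕ} (hAB : A ∪ B = univ) (hT : A ∩ B ⊆ T)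
    (hTk : T.card ≤ k) (hlow : k < ((X ∩ A) \ T).card)
    (hhigh : ((X ∩ A) \ T).card + 2 * k + 1 ≤ X.card) :
    k + 1 ≤ (X ∩ (A \ B)).card ∧ k + 1 ≤ (X ∩ (B \ A)).card := by
  have hA : (X ∩ A) \ T ⊆ X ∩ (A \ B) := fun v hv => by
    simp only [mem_sdiff, mem_inter] at hv ⊢
    exact ⟨hv.1.1, hv.1.2, fun hvB => hv.2 (hT (mem_inter.2 ⟨hv.1.2, hvB⟩))⟩
  have hB : X \ A ⊆ X ∩ (B \ A) := fun v hv => by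
    have hvAB : v ∈ A ∪ B := hAB ▸ mem_univ v
    simp only [mem_sdiff, mem_inter, mem_union] at hv hvAB ⊢
    exact ⟨hv.1, hvAB.resolve_left hv.2, hv.2⟩
  have hXA : (X ∩ A).card ≤ ((X ∩ A) \ T).card + T.card := card_le_card_sdiff_add_card
  have hX : (X \ A).card + (X ∩ A).card = X.card := card_sdiff_add_card_inter X A
  constructor
  · exact (card_le_card hA).trans' hlow
  · have := card_le_card hB
    omega

namespace RTDOn

variable {V : Type} [Fintype V] [DecidableEq V] {G : SimpleGraph V} (D : RTD V G)

lemma exists_isSeparation_inter_subset_bag {t : D.ι} (K : Finset D.ι)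
    (hK : ∀ c ∈ K, D.parent c = t) :
    ∃ A B : Finset V, IsSeparation G A B ∧ A ∩ B ⊆ D.bag t ∧
      A \ D.bag t = K.biUnion fun c => D.gammaFinset c \ D.bag t := by
  classical
  let inK (s : D.ι) : Prop := ∃ c ∈ K, D.IsDescendant s c
  refine ⟨univ.filter fun v => v ∈ D.bag t ∨ ∃ s, inK s ∧ v ∈ D.bag s,
    univ.filter fun v => v ∈ D.bag t ∨ ∃ s, ¬inK s ∧ v ∈ D.bag s, ⟨?_, ?_⟩, ?_, ?_⟩
  · refine eq_univ_of_forall fun v => ?_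
    obtain ⟨s, hv⟩ := D.exists_mem_bag (mem_univ v)
    by_cases hs : inK s <;> simp only [mem_union, mem_filter, mem_univ, true_and]
    exacts [Or.inl (Or.inr ⟨s, hs, hv⟩), Or.inr (Or.inr ⟨s, hs, hv⟩)]
  · intro a ha haB b hb hbA hab
    obtain ⟨s, has, hbs⟩ := D.edge_in_bag a (mem_univ a) b (mem_univ b) hab
    by_cases hs : inK s
    · exact hbA (mem_filter.2 ⟨mem_univ b, Or.inr ⟨s, hs, hbs⟩⟩)
    · exact haB (mem_filter.2 ⟨mem_univ a, Or.inr ⟨s, hs, has⟩⟩)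
  · intro v hv
    simp only [mem_inter, mem_filter, mem_univ, true_and] at hv
    obtain ⟨hv | ⟨s₁, ⟨c, hc, hs₁⟩, hv₁⟩, hv' | ⟨s₂, hs₂, hv₂⟩⟩ := hv
    exacts [hv, hv, hv', hK c hc ▸ mem_bag_parent_of_mem_bag (mem_univ v) hv₁ hs₁ hv₂
      fun h => hs₂ ⟨c, hc, h⟩]
  · ext v
    simp only [mem_sdiff, mem_filter, mem_univ, true_and, mem_biUnion, mem_gammaFinset]
    constructor
    · rintro ⟨hv | ⟨s, ⟨c, hc, hs⟩, hv⟩, hvt⟩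
      exacts [absurd hv hvt, ⟨c, hc, ⟨s, hs, hv⟩, hvt⟩]
    · rintro ⟨c, hc, ⟨s, hs, hv⟩, hvt⟩
      exact ⟨Or.inr ⟨s, ⟨c, hc, hs⟩, hv⟩, hvt⟩

theorem exists_balanced_separation {k : ℕ} (hD : ∀ t, (D.bag t).card ≤ k)
    (X : Finset V) (hX : 6 * k + 2 ≤ X.card) :
    ∃ A B : Finset V, IsSeparation G A B ∧ (A ∩ B).card ≤ k ∧
      k + 1 ≤ (X ∩ (A \ B)).card ∧ k + 1 ≤ (X ∩ (B \ A)).card := by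
  have hroot : X ∩ D.gammaFinset D.root = X := inter_eq_left.2 fun v _ =>
    let ⟨s, hs⟩ := D.exists_mem_bag (mem_univ v); mem_gammaFinset.2 ⟨s, D.reaches_root s, hs⟩
  obtain ⟨t, hheavy, hlight⟩ := D.exists_forall_children_not
    (P := fun t => X.card < 2 * (X ∩ D.gammaFinset t).card) ⟨D.root, by simp only [hroot]; omega⟩
  let piece (c : D.ι) : Finset V := X ∩ (D.gammaFinset c \ D.bag t)
  have hpiece : ∀ c ∈ D.children t, (piece c).card ≤ X.card / 2 := fun c hc =>
    (card_le_card (inter_subset_inter_left sdiff_subset)).trans (by have := hlight c hc; omega)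
  have hdisj : (↑(D.children t) : Set D.ι).PairwiseDisjoint piece := fun c hc c' hc' hne =>
    (disjoint_gammaFinset_sdiff_bag hc hc' hne).mono inter_subset_right inter_subset_right
  -- Collecting child subtrees until more than `k` vertices of `X` outside `D.bag t` are gathered
  -- overshoots by at most `|X| / 2`, which leaves more than `k` of them for the other side.
  obtain ⟨K, hK, hlow, hhigh⟩ := exists_subset_lt_sum_le_add hpiece (b := k)
    (show k < ∑ c ∈ D.children t, (X ∩ (D.gammaFinset c \ D.bag t)).card by
      have := D.card_inter_gammaFinset_le X t; have := hD t; omega)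
  obtain ⟨A, B, hsep, hABt, hAt⟩ :=
    D.exists_isSeparation_inter_subset_bag K fun c hc => (mem_children.1 (hK hc)).1
  have hcard : ((X ∩ A) \ D.bag t).card = ∑ c ∈ K, (piece c).card := by
    rw [inter_sdiff_assoc, hAt, inter_biUnion, card_biUnion (hdisj.subset hK)]
  obtain ⟨hleft, hright⟩ := le_card_inter_sdiff_of_union_eq_univ hsep.1 hABt (hD t)
    (hcard ▸ hlow) (by omega)
  exact ⟨A, B, hsep, (card_le_card hABt).trans (hD t), hleft, hright⟩

end RTDOn

lemma extNbhd_subset_of_isCompAway {V : Type} {G : SimpleGraph V} {X Z : Set V}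
    (h : IsCompAway G X Z) : extNbhd G Z ⊆ X :=
  fun _ ⟨hvZ, _, hz, hadj⟩ => h.2.2 hz hadj hvZ

section Components

variable {V : Type} [Fintype V] [DecidableEq V] {G : SimpleGraph V}

lemma subset_sdiff_of_mem_sdiff {Z : Set V} (hZ : (G.induce Z).Preconnected) {A B : Finset V}
    (hAB : IsSeparation G A B) (hdisj : Disjoint Z ↑(A ∩ B)) {z₀ : V} (hz₀ : z₀ ∈ Z)
    (h : z₀ ∈ A \ B) : Z ⊆ ↑(A \ B) := by
  intro z hz
  by_contra hzA
  obtain ⟨p⟩ := hZ ⟨z₀, hz₀⟩ ⟨z, hz⟩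
  obtain ⟨d, -, hin, hout⟩ := p.exists_boundary_dart {x : Z | (x : V) ∈ A \ B} h hzA
  have hcover : (d.snd : V) ∈ A ∪ B := hAB.1 ▸ mem_univ _
  have hnotAB : (d.snd : V) ∉ A ∩ B := Set.disjoint_left.1 hdisj d.snd.2
  simp only [Set.mem_ofPred_eq, mem_sdiff, mem_union, mem_inter]
    at hin hout hcover hnotAB
  have hsnd : (d.snd : V) ∈ B ∧ (d.snd : V) ∉ A := by tauto
  exact hAB.2 _ hin.1 hin.2 _ hsnd.1 hsnd.2 d.adj

lemma subset_sdiff_or_subset_sdiff {Z : Set V} (hZ : (G.induce Z).Connected) {A B : Finset V}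
    (hAB : IsSeparation G A B) (hdisj : Disjoint Z ↑(A ∩ B)) :
    Z ⊆ ↑(A \ B) ∨ Z ⊆ ↑(B \ A) := by
  obtain ⟨⟨z₀, hz₀⟩⟩ := hZ.nonempty
  have hcover : z₀ ∈ A ∪ B := hAB.1 ▸ mem_univ _
  by_cases hB : z₀ ∈ B
  · have hA : z₀ ∉ A := fun hA => Set.disjoint_left.1 hdisj hz₀ (mem_inter.2 ⟨hA, hB⟩)
    exact Or.inr <| subset_sdiff_of_mem_sdiff hZ.preconnected hAB.symm2
      (inter_comm A B ▸ hdisj) hz₀ (mem_sdiff.2 ⟨hB, hA⟩)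
  · exact Or.inl <| subset_sdiff_of_mem_sdiff hZ.preconnected hAB hdisj hz₀
      (mem_sdiff.2 ⟨(mem_union.1 hcover).resolve_right hB, hB⟩)

lemma ncard_extNbhd_lt_of_subset_sdiff {Z : Set V} {A B X₀ : Finset V} {k : ℕ}
    (hAB : IsSeparation G A B) (hZ : Z ⊆ ↑(A \ B)) (hN : extNbhd G Z ⊆ ↑(X₀ ∪ A ∩ B))
    (hsep : (A ∩ B).card ≤ k) (hB : k + 1 ≤ (X₀ ∩ (B \ A)).card) :
    (extNbhd G Z).ncard < X₀.card := by
  have hsub : extNbhd G Z ⊆ ↑(X₀ \ (B \ A) ∪ A ∩ B) := by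
    intro v hv
    have hvBA : v ∉ B \ A := fun hv' => by
      obtain ⟨-, z, hz, hadj⟩ := hv
      have hz' := mem_sdiff.1 (hZ hz)
      exact hAB.2 z hz'.1 hz'.2 v (mem_sdiff.1 hv').1 (mem_sdiff.1 hv').2 hadj.symm
    rcases mem_union.1 (hN hv) with hv | hv
    exacts [mem_union_left _ (mem_sdiff.2 ⟨hv, hvBA⟩), mem_union_right _ hv]
  have hX₀ := card_sdiff_add_card_inter X₀ (B \ A)
  calc (extNbhd G Z).ncard ≤ (X₀ \ (B \ A) ∪ A ∩ B).card :=
        (Set.ncard_le_ncard hsub).trans_eq (Set.ncard_coe_finset _)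
    _ ≤ (X₀ \ (B \ A)).card + (A ∩ B).card := card_union_le _ _
    _ < X₀.card := by omega

theorem exists_superset_ncard_extNbhd_lt (D : RTD V G) {k : ℕ} (hD : ∀ t, (D.bag t).card ≤ k)
    (X₀ : Finset V) (hX₀ : 6 * k + 2 ≤ X₀.card) :
    ∃ X : Finset V, X₀ ⊆ X ∧ X.card ≤ X₀.card + k ∧
      ∀ Z : Set V, IsCompAway G ↑X Z → (extNbhd G Z).ncard < X₀.card := by
  obtain ⟨A, B, hAB, hsep, hA, hB⟩ := D.exists_balanced_separation hD X₀ hX₀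
  refine ⟨X₀ ∪ A ∩ B, subset_union_left,
    (card_union_le _ _).trans (by omega), fun Z hZ => ?_⟩
  have hN := extNbhd_subset_of_isCompAway hZ
  have hdisj : Disjoint Z ↑(A ∩ B) :=
    hZ.1.mono_right (coe_subset.2 subset_union_right)
  rcases subset_sdiff_or_subset_sdiff hZ.2.1 hAB hdisj with hZA | hZB
  · exact ncard_extNbhd_lt_of_subset_sdiff hAB hZA hN hsep hB
  · rw [inter_comm] at hN hsep
    exact ncard_extNbhd_lt_of_subset_sdiff hAB.symm2 hZB hN hsep hA

end Components

section Treewidth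

variable {V : Type} [Fintype V] [DecidableEq V] {G : SimpleGraph V}

def singleBagRTD (G : SimpleGraph V) : RTD V G where
  ι := Unit
  instFintype := inferInstance
  instDecEq := inferInstance
  root := ()
  parent := id
  parent_root := rfl
  reaches_root _ := ⟨0, rfl⟩
  bag _ := univ
  bag_subset _ := subset_rfl
  bags_connected v _ := by
    have : Nonempty ({t : Unit | v ∈ (univ : Finset V)} : Set Unit) :=
      ⟨⟨(), mem_univ v⟩⟩
    exact ⟨fun a b => by cases Subsingleton.elim a b; exact SimpleGraph.Reachable.refl a⟩
  edge_in_bag u _ v _ _ := ⟨(), mem_univ u, mem_univ v⟩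

lemma exists_rtd_card_bag_le {k : ℕ} (h : treewidth G < k) :
    ∃ D : RTD V G, ∀ t, (D.bag t).card ≤ k := by
  obtain ⟨D, hD⟩ := Nat.sInf_mem (s := {w | ∃ D : RTD V G, D.widthLe w})
    ⟨_, singleBagRTD G, fun _ => (card_univ (α := V)).trans_le (Nat.le_succ _)⟩
  exact ⟨D, fun t => (hD t).trans h⟩

lemma extNbhd_eq_empty_of_card_bag_le_one {D : RTD V G} (hD : ∀ t, (D.bag t).card ≤ 1)
    (Z : Set V) : extNbhd G Z = ∅ := by
  refine Set.eq_empty_of_forall_notMem fun v ⟨_, z, _, hadj⟩ => ?_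
  obtain ⟨t, hv, hz⟩ := D.edge_in_bag v (mem_univ v) z (mem_univ z) hadj
  exact absurd (hD t) (not_le.2 (one_lt_card.2 ⟨v, hv, z, hz, hadj.ne⟩))

end Treewidth

lemma add_add_one_le_add_mul_choose_sq {k ρ : ℕ} (hk : 0 < k) (hρ : k + 1 ≤ ρ) :
    ρ + k + 1 ≤ ρ + 2 * k * (ρ.choose (k + 1)) ^ 2 := by
  have := Nat.mul_le_mul_left (2 * k) (Nat.one_le_pow 2 _ (Nat.choose_pos hρ))
  omega

theorem stmt5_general {V : Type} [Fintype V] [DecidableEq V]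
    (k τ ρ ζ : ℕ) (hτ : τ = 6 * k)
    (hρ : ρ = τ + 2 * (k - 1) * τ.choose 2)
    (hζ : ζ = ρ + 2 * k * (ρ.choose (k + 1)) ^ 2)
    (H : SimpleGraph V) (htw : treewidth H < k) (S : Finset V)
    (ha2 : S ≠ Finset.univ)
    (hb : S.card ≤ ρ) :
    ∃ X : Finset V, S ⊂ X ∧ X.card ≤ ζ ∧
      ∀ Z : Set V, IsCompAway H (↑X) Z → (extNbhd H Z).ncard ≤ ρ := by
  obtain ⟨D, hD⟩ := exists_rtd_card_bag_le htw
  obtain ⟨v₀, hv₀⟩ : ∃ v, v ∉ S := by simpa [eq_univ_iff_forall] using ha2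
  have hSX₀ : S ⊂ insert v₀ S := ssubset_insert hv₀
  have hX₀ : (insert v₀ S).card ≤ ρ + 1 := (card_insert_le _ _).trans (by omega)
  have hk : 0 < k := (Nat.zero_le _).trans_lt htw
  have hρk : 6 * k ≤ ρ := by omega
  have hζρ : ρ + k + 1 ≤ ζ := hζ ▸ add_add_one_le_add_mul_choose_sq hk (by omega)
  rcases lt_or_ge k 2 with hk2 | hk2
  · refine ⟨insert v₀ S, hSX₀, by omega, fun Z _ => ?_⟩
    simp [extNbhd_eq_empty_of_card_bag_le_one (fun t => (hD t).trans (by omega : k ≤ 1)) Z]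
  rcases le_or_gt (insert v₀ S).card ρ with hsmall | hbig
  · exact ⟨insert v₀ S, hSX₀, by omega, fun Z hZ => (Set.ncard_le_ncard
      (extNbhd_subset_of_isCompAway hZ)).trans ((Set.ncard_coe_finset _).trans_le hsmall)⟩
  have hρ6 : 6 * k + 1 ≤ ρ := by
    have := Nat.mul_le_mul_left (2 * (k - 1)) (Nat.choose_pos (by omega : 2 ≤ τ))
    omega
  obtain ⟨X, hX₀X, hXcard, hX⟩ := exists_superset_ncard_extNbhd_lt D hD (insert v₀ S) (by omega)
  exact ⟨X, hSX₀.trans_subset hX₀X, by omega, fun Z hZ => by have := hX Z hZ; omega⟩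

/-- Given a connected `k`-complemented graph `H` of treewidth `< k` and a
set `S` satisfying (a)–(e), there is a set `X ⊋ S` with `|X| ≤ ζ` such that every
connected component `Z` of `H − X` has `|N_H(Z)| ≤ ρ`. -/
theorem stmt5 {V : Type} [Fintype V] [DecidableEq V]
    (k τ ρ ζ : ℕ) (hk : 0 < k) (hτ : τ = 6 * k)
    (hρ : ρ = τ + 2 * (k - 1) * τ.choose 2)
    (hζ : ζ = ρ + 2 * k * (ρ.choose (k + 1)) ^ 2)
    (H : SimpleGraph V) (hconn : H.Connected) (hcomp : KComplemented H k)
    (htw : treewidth H < k) (S : Finset V)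
    (ha1 : S.Nonempty) (ha2 : S ≠ Finset.univ)
    (hb : S.card ≤ ρ)
    (hc : ¬H.IsClique (↑S : Set V))
    (hd : (H.induce ((↑S : Set V)ᶜ)).Connected)
    (he : (↑S : Set V) = extNbhd H ((↑S : Set V)ᶜ)) :
    ∃ X : Finset V, S ⊂ X ∧ X.card ≤ ζ ∧
      ∀ Z : Set V, IsCompAway H (↑X) Z → (extNbhd H Z).ncard ≤ ρ :=
  stmt5_general k τ ρ ζ hτ hρ hζ H htw S ha2 hb
end

section
/- For every finite graph G and positive integer k, the k-improved graph G^{(k)} is k-complemented; consequently, G^{(k)} is the unique minimal k-complemented supergraph of G on the vertex set V(G). -/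
/-! A separation of `G` of order `< k` already witnesses `conn_G(a, b) < k` for every pair `a, b`
on opposite sides of it, so none of these pairs becomes an edge of `G^{(k)}`: the separation
survives in `G^{(k)}`. Hence `conn_{G^{(k)}}(x, y) < k` exactly when `conn_G(x, y) < k`. -/

section ImprovedGraph

variable {V : Type} [Fintype V] [DecidableEq V] {G H : SimpleGraph V} {A B : Finset V}
  {x y : V} {k : ℕ}

lemma IsSeparation.of_le (hGH : G ≤ H) (h : IsSeparation H A B) : IsSeparation G A B :=
  ⟨h.1, fun a ha ha' b hb hb' hab => h.2 a ha ha' b hb hb' (hGH hab)⟩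

lemma ConnLt.of_le (hGH : G ≤ H) (h : ConnLt H x y k) : ConnLt G x y k := by
  obtain ⟨A, B, hsep, hxA, hxB, hyB, hyA, hcard⟩ := h
  exact ⟨A, B, hsep.of_le hGH, hxA, hxB, hyB, hyA, hcard⟩

lemma ConnLt.not_adj (h : ConnLt G x y k) : ¬G.Adj x y := by
  obtain ⟨A, B, hsep, hxA, hxB, hyB, hyA, -⟩ := h
  exact hsep.2 x hxA hxB y hyB hyA

lemma le_improvedGraph (G : SimpleGraph V) (k : ℕ) : G ≤ improvedGraph G k :=
  fun _ _ hxy => ⟨G.ne_of_adj hxy, fun h => h.not_adj hxy⟩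

lemma IsSeparation.improvedGraph (h : IsSeparation G A B) (hcard : (A ∩ B).card < k) :
    IsSeparation (improvedGraph G k) A B :=
  ⟨h.1, fun _ ha ha' _ hb hb' hab => hab.2 ⟨A, B, h, ha, ha', hb, hb', hcard⟩⟩

lemma connLt_improvedGraph_iff : ConnLt (improvedGraph G k) x y k ↔ ConnLt G x y k := by
  refine ⟨fun h => h.of_le (le_improvedGraph G k), ?_⟩
  rintro ⟨A, B, hsep, hxA, hxB, hyB, hyA, hcard⟩
  exact ⟨A, B, hsep.improvedGraph hcard, hxA, hxB, hyB, hyA, hcard⟩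

lemma kComplemented_improvedGraph (G : SimpleGraph V) (k : ℕ) :
    KComplemented (improvedGraph G k) k := fun _ _ hxy hnadj =>
  connLt_improvedGraph_iff.2 (not_not.1 fun h => hnadj ⟨hxy, h⟩)

lemma improvedGraph_le_of_kComplemented (hH : KComplemented H k) (hGH : G ≤ H) :
    improvedGraph G k ≤ H := fun x y hxy => by
  by_contra hnadj
  exact hxy.2 ((hH x y hxy.1 hnadj).of_le hGH)

end ImprovedGraph

theorem stmt7_general {V : Type} [Fintype V] [DecidableEq V] (G : SimpleGraph V)
    (k : ℕ) :
    KComplemented (improvedGraph G k) k ∧ G ≤ improvedGraph G k ∧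
      ∀ H : SimpleGraph V, KComplemented H k → G ≤ H → improvedGraph G k ≤ H :=
  ⟨kComplemented_improvedGraph G k, le_improvedGraph G k,
    fun _ hH hGH => improvedGraph_le_of_kComplemented hH hGH⟩

/-- The `k`-improved graph `G^{(k)}` is `k`-complemented; consequently it
is the unique minimal `k`-complemented supergraph of `G` on the vertex set `V(G)`:
it is a `k`-complemented supergraph of `G` and is contained in every `k`-complemented
supergraph of `G`. -/
theorem stmt7 {V : Type} [Fintype V] [DecidableEq V] (G : SimpleGraph V)
    (k : ℕ) (hk : 0 < k) :
    KComplemented (improvedGraph G k) k ∧ G ≤ improvedGraph G k ∧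
      ∀ H : SimpleGraph V, KComplemented H k → G ≤ H → improvedGraph G k ≤ H :=
  stmt7_general G k
end

section
/- Let k be a positive integer and G a finite graph. Every rooted tree decomposition (T,β) of G of width less than k is also a tree decomposition of the k-improved graph G^{(k)}. -/
/-!
Cut the tree at a tree edge `(t, parent t)`: the bags inside and outside the subtree below `t`
give a separation of `G` whose order is at most `|β(t) ∩ β(parent t)|`, because a vertex
occurring on both sides must occur in both bags of the cut edge. If `u` and `v` share no bag,
choose `t` as the top node of the subtree of one of them, say `u`, whose subtree does not
contain the other's; then `u` lies in `β(t)` but not in `β(parent t)`, so the separation has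
order `< |β(t)| ≤ k`, and `conn_G(u, v) < k`.
-/

section RootedTree

variable {ι : Type*} {p : ι → ι}

/-- `t` lies on the path from `s` to the root (possibly `t = s`). -/
def IsAncestor (p : ι → ι) (t s : ι) : Prop := ∃ n, p^[n] s = t

theorem IsAncestor.refl (t : ι) : IsAncestor p t t := ⟨0, rfl⟩

theorem IsAncestor.of_parent {t s : ι} (h : IsAncestor p t (p s)) : IsAncestor p t s := by
  obtain ⟨n, hn⟩ := h
  exact ⟨n + 1, by rwa [Function.iterate_succ_apply]⟩

theorem IsAncestor.parent_of_ne {t s : ι} (h : IsAncestor p t s) (hne : s ≠ t) :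
    IsAncestor p t (p s) := by
  obtain ⟨_ | n, hn⟩ := h
  · exact absurd hn hne
  · exact ⟨n, by rwa [← Function.iterate_succ_apply]⟩

theorem eq_and_eq_parent_of_adj {a b t : ι}
    (hab : (SimpleGraph.fromRel fun s t => p s = t).Adj a b)
    (ha : IsAncestor p t a) (hb : ¬ IsAncestor p t b) : a = t ∧ b = p t := by
  obtain ⟨-, h | h⟩ := hab
  · by_cases hat : a = t
    · exact ⟨hat, by rw [← h, hat]⟩
    · exact absurd (h ▸ ha.parent_of_ne hat) hb
  · exact absurd (h ▸ ha).of_parent hb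

variable {r : ι} (hr : p r = r) (hreach : ∀ t, ∃ n, p^[n] t = r)
include hr hreach

theorem eq_root_of_isPeriodicPt {t : ι} {n : ℕ} (hn : 0 < n)
    (ht : Function.IsPeriodicPt p n t) : t = r := by
  obtain ⟨m, hm⟩ := hreach t
  have hle : m ≤ n * m := Nat.le_mul_of_pos_left m hn
  calc t = p^[n * m] t := (ht.mul_const m).eq.symm
    _ = p^[n * m - m] (p^[m] t) := by rw [← Function.iterate_add_apply, Nat.sub_add_cancel hle]
    _ = r := by rw [hm, Function.iterate_fixed hr]

theorem IsAncestor.antisymm {t s : ι} (hts : IsAncestor p t s) (hst : IsAncestor p s t) :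
    t = s := by
  obtain ⟨_ | n, hn⟩ := hts
  · exact hn.symm
  obtain ⟨m, hm⟩ := hst
  have hs : s = r := eq_root_of_isPeriodicPt hr hreach (Nat.add_pos_right m n.succ_pos)
    (by rw [Function.IsPeriodicPt, Function.IsFixedPt, Function.iterate_add_apply, hn, hm])
  rw [← hn, hs, Function.iterate_fixed hr]

theorem not_isAncestor_parent {t : ι} (ht : t ≠ r) : ¬ IsAncestor p t (p t) := fun ⟨n, hn⟩ =>
  ht (eq_root_of_isPeriodicPt hr hreach n.succ_pos (by rwa [Function.IsPeriodicPt,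
    Function.IsFixedPt, Function.iterate_succ_apply]))

end RootedTree

namespace RTDOn

variable {V : Type} [Fintype V] [DecidableEq V] {G : SimpleGraph V} {W : Finset V}

theorem exists_mem_bag_s9 (D : RTDOn V G W) {x : V} (hx : x ∈ W) : ∃ t, x ∈ D.bag t := by
  obtain ⟨⟨t, ht⟩⟩ := (D.bags_connected x hx).nonempty
  exact ⟨t, ht⟩

theorem mem_bag_inter_bag_parent (D : RTDOn V G W) {x : V} {t s₁ s₂ : D.ι}
    (h₁ : x ∈ D.bag s₁) (h₂ : x ∈ D.bag s₂)
    (hs₁ : IsAncestor D.parent t s₁) (hs₂ : ¬ IsAncestor D.parent t s₂) :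
    x ∈ D.bag t ∩ D.bag (D.parent t) := by
  obtain ⟨w⟩ := (D.bags_connected x (D.bag_subset s₁ h₁)).preconnected ⟨s₁, h₁⟩ ⟨s₂, h₂⟩
  obtain ⟨d, -, hd₁, hd₂⟩ :=
    w.exists_boundary_dart {a | IsAncestor D.parent t a.1} hs₁ hs₂
  obtain ⟨hfst, hsnd⟩ := eq_and_eq_parent_of_adj d.adj hd₁ hd₂
  exact Finset.mem_inter.mpr ⟨hfst ▸ d.fst.2, hsnd ▸ d.snd.2⟩

def IsTopNode (D : RTDOn V G W) (x : V) (t : D.ι) : Prop :=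
  x ∈ D.bag t ∧ ∀ s, x ∈ D.bag s → IsAncestor D.parent t s

theorem exists_isTopNode (D : RTDOn V G W) {x : V} (hx : x ∈ W) : ∃ t, D.IsTopNode x t := by
  obtain ⟨s, hs⟩ := D.exists_mem_bag_s9 hx
  obtain ⟨n, hn⟩ := D.reaches_root s
  induction n generalizing s with
  | zero =>
    obtain rfl : s = D.root := hn
    exact ⟨_, hs, fun s' _ => D.reaches_root s'⟩
  | succ n ih =>
    by_cases htop : ∀ s', x ∈ D.bag s' → IsAncestor D.parent s s'
    · exact ⟨s, hs, htop⟩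
    simp only [not_forall] at htop
    obtain ⟨s', hs', hns'⟩ := htop
    exact ih (D.parent s) (Finset.mem_inter.mp
      (D.mem_bag_inter_bag_parent hs hs' (.refl s) hns')).2 (by rwa [← Function.iterate_succ_apply])

open Classical in
noncomputable def bagUnion (D : RTDOn V G W) (S : Set D.ι) : Finset V :=
  Finset.univ.filter fun v => ∃ s ∈ S, v ∈ D.bag s

@[simp]
theorem mem_bagUnion (D : RTDOn V G W) {S : Set D.ι} {v : V} :
    v ∈ D.bagUnion S ↔ ∃ s ∈ S, v ∈ D.bag s := by
  simp [bagUnion]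

theorem isSeparation_bagUnion_compl (D : RTD V G) (S : Set D.ι) :
    IsSeparation G (D.bagUnion S) (D.bagUnion Sᶜ) := by
  constructor
  · refine Finset.eq_univ_of_forall fun v => ?_
    obtain ⟨s, hs⟩ := D.exists_mem_bag_s9 (Finset.mem_univ v)
    by_cases hS : s ∈ S
    · exact Finset.mem_union_left _ (D.mem_bagUnion.mpr ⟨s, hS, hs⟩)
    · exact Finset.mem_union_right _ (D.mem_bagUnion.mpr ⟨s, hS, hs⟩)
  · intro a _ haB b _ hbA hab
    obtain ⟨s, has, hbs⟩ := D.edge_in_bag a (Finset.mem_univ a) b (Finset.mem_univ b) hab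
    by_cases hS : s ∈ S
    · exact hbA (D.mem_bagUnion.mpr ⟨s, hS, hbs⟩)
    · exact haB (D.mem_bagUnion.mpr ⟨s, hS, has⟩)

theorem connLt_of_isTopNode {k : ℕ} (D : RTD V G) {x y : V} {t s : D.ι}
    (hx : D.IsTopNode x t) (hys : y ∈ D.bag s) (hs : ¬ IsAncestor D.parent t s)
    (hyt : y ∉ D.bag t) (hk : (D.bag t).card ≤ k) : ConnLt G x y k := by
  set S : Set D.ι := {s | IsAncestor D.parent t s}
  have ht : t ≠ D.root := fun h => hs (h ▸ D.reaches_root s)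
  have hcut : D.bagUnion S ∩ D.bagUnion Sᶜ ⊆ (D.bag t).erase x := by
    intro w hw
    obtain ⟨⟨s₁, hs₁, hw₁⟩, ⟨s₂, hs₂, hw₂⟩⟩ := by
      simpa only [Finset.mem_inter, mem_bagUnion] using hw
    obtain ⟨hwt, hwpt⟩ := Finset.mem_inter.mp (D.mem_bag_inter_bag_parent hw₁ hw₂ hs₁ hs₂)
    refine Finset.mem_erase.mpr ⟨fun hwx => ?_, hwt⟩
    exact not_isAncestor_parent D.parent_root D.reaches_root ht (hx.2 _ (hwx ▸ hwpt))
  refine ⟨D.bagUnion S, D.bagUnion Sᶜ, D.isSeparation_bagUnion_compl S,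
    D.mem_bagUnion.mpr ⟨t, .refl t, hx.1⟩, ?_, D.mem_bagUnion.mpr ⟨s, hs, hys⟩, ?_, ?_⟩
  · intro hxB
    obtain ⟨s', hs', hxs'⟩ := D.mem_bagUnion.mp hxB
    exact hs' (hx.2 s' hxs')
  · intro hyA
    obtain ⟨s', hs', hys'⟩ := D.mem_bagUnion.mp hyA
    exact hyt (Finset.mem_inter.mp (D.mem_bag_inter_bag_parent hys' hys hs' hs)).1
  · calc (D.bagUnion S ∩ D.bagUnion Sᶜ).card
        ≤ ((D.bag t).erase x).card := Finset.card_le_card hcut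
      _ < (D.bag t).card := Finset.card_erase_lt_of_mem hx.1
      _ ≤ k := hk

end RTDOn

theorem stmt9_general {V : Type} [Fintype V] [DecidableEq V] (k : ℕ)
    (G : SimpleGraph V) (D : RTD V G) (hw : ∀ t, (D.bag t).card ≤ k) :
    ∀ u v, (improvedGraph G k).Adj u v → ∃ t, u ∈ D.bag t ∧ v ∈ D.bag t := by
  intro u v huv
  by_contra! hno
  obtain ⟨tu, htu⟩ := D.exists_isTopNode (Finset.mem_univ u)
  obtain ⟨tv, htv⟩ := D.exists_isTopNode (Finset.mem_univ v)
  by_cases hanc : IsAncestor D.parent tu tv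
  · have hvu : ¬ IsAncestor D.parent tv tu := fun h =>
      hno tu htu.1 (hanc.antisymm D.parent_root D.reaches_root h ▸ htv.1)
    exact huv.symm.2 (D.connLt_of_isTopNode htv htu.1 hvu (fun h => hno tv h htv.1) (hw tv))
  · exact huv.2 (D.connLt_of_isTopNode htu htv.1 hanc (hno tu htu.1) (hw tu))

/-- A rooted tree decomposition of `G` of width `< k` (all bags of size
at most `k`) is also a tree decomposition of `G^{(k)}`: since all the conditions other
than the edge condition do not refer to the graph, it suffices that every edge of
`G^{(k)}` lies inside some bag. -/
theorem stmt9 {V : Type} [Fintype V] [DecidableEq V] (k : ℕ) (hk : 0 < k)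
    (G : SimpleGraph V) (D : RTD V G) (hw : ∀ t, (D.bag t).card ≤ k) :
    ∀ u v, (improvedGraph G k).Adj u v → ∃ t, u ∈ D.bag t ∧ v ∈ D.bag t :=
  stmt9_general k G D hw
end

section
/- Let G be a finite graph, S ⊆ V(G), and let L, R ⊆ S be disjoint subsets. If (A,B) is an L–R separation of minimum order among all L–R separations, then there exists a partition (S_L, S_R) of S with L ⊆ S_L ⊆ A and R ⊆ S_R ⊆ B such that (A,B) is an S_L–S_R separation of minimum order among all S_L–S_R separations; in particular, (A,B) is S-stable. -/
section Separations

variable {V : Type} [Fintype V] [DecidableEq V] {G : SimpleGraph V}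

theorem IsSepFor.mono {X Y X' Y' A B : Finset V}
    (h : IsSepFor G X' Y' A B) (hX : X ⊆ X') (hY : Y ⊆ Y') : IsSepFor G X Y A B :=
  ⟨h.1, hX.trans h.2.1, hY.trans h.2.2⟩

/-- Enlarging the two sides inside `A` and `B` only removes competitors, so `(A, B)` stays
minimum. -/
theorem IsMinSepFor.of_subset {X Y X' Y' A B : Finset V}
    (h : IsMinSepFor G X Y A B) (hX : X ⊆ X') (hXA : X' ⊆ A) (hY : Y ⊆ Y') (hYB : Y' ⊆ B) :
    IsMinSepFor G X' Y' A B :=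
  ⟨⟨h.1.1, hXA, hYB⟩, fun A' B' h' => h.2 A' B' (h'.mono hX hY)⟩

end Separations

theorem Finset.exists_partition_between {V : Type*} [DecidableEq V] {L R S A B : Finset V}
    (hL : L ⊆ S) (hR : R ⊆ S) (hLR : Disjoint L R) (hLA : L ⊆ A) (hRB : R ⊆ B)
    (hAB : S ⊆ A ∪ B) :
    ∃ SL SR : Finset V, SL ∪ SR = S ∧ Disjoint SL SR ∧
      L ⊆ SL ∧ SL ⊆ A ∧ R ⊆ SR ∧ SR ⊆ B := by
  refine ⟨(S ∩ A) \ R, S \ ((S ∩ A) \ R),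
    union_sdiff_of_subset (sdiff_subset.trans inter_subset_left), disjoint_sdiff,
    fun v hv => ?_, sdiff_subset.trans inter_subset_right, fun v hv => ?_, fun v hv => ?_⟩
  · simp only [mem_sdiff, mem_inter]
    exact ⟨⟨hL hv, hLA hv⟩, disjoint_left.mp hLR hv⟩
  · simp only [mem_sdiff, mem_inter]
    exact ⟨hR hv, fun h => h.2 hv⟩
  · obtain ⟨hvS, hvSL⟩ := mem_sdiff.mp hv
    by_cases hvA : v ∈ A
    · exact hRB (not_not.mp fun hvR => hvSL (mem_sdiff.mpr ⟨mem_inter.mpr ⟨hvS, hvA⟩, hvR⟩))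
    · exact (mem_union.mp (hAB hvS)).resolve_left hvA

/-- If `(A,B)` is a minimum-order `L`–`R` separation for disjoint
`L, R ⊆ S`, then there is a partition `(S_L, S_R)` of `S` with `L ⊆ S_L ⊆ A` and
`R ⊆ S_R ⊆ B` such that `(A,B)` is a minimum-order `S_L`–`S_R` separation;
in particular `(A,B)` is `S`-stable. -/
theorem stmt12 {V : Type} [Fintype V] [DecidableEq V] (G : SimpleGraph V)
    (S L R A B : Finset V) (hL : L ⊆ S) (hR : R ⊆ S) (hLR : Disjoint L R)
    (h : IsMinSepFor G L R A B) :
    (∃ SL SR : Finset V, SL ∪ SR = S ∧ Disjoint SL SR ∧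
      L ⊆ SL ∧ SL ⊆ A ∧ R ⊆ SR ∧ SR ⊆ B ∧ IsMinSepFor G SL SR A B) ∧
    IsStable G S A B := by
  obtain ⟨SL, SR, hunion, hdisj, hLSL, hSLA, hRSR, hSRB⟩ :=
    Finset.exists_partition_between hL hR hLR h.1.2.1 h.1.2.2
      (h.1.1.1 ▸ Finset.subset_univ S)
  have hmin : IsMinSepFor G SL SR A B := h.of_subset hLSL hSLA hRSR hSRB
  exact ⟨⟨SL, SR, hunion, hdisj, hLSL, hSLA, hRSR, hSRB, hmin⟩, SL, SR, hdisj, hunion, hmin⟩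
end

section
/- Let k be a positive integer, let G be a finite graph of treewidth less than k, and let S ⊆ V(G) with |S| > 6k. Then there exist disjoint subsets L, R ⊆ S with |L| = |R| = k+1 and a separation (A,B) of G of order at most k with L ⊆ A and R ⊆ B. -/
/-!
Take a rooted tree decomposition with bags of size at most `k` and a node `t` such that the
bags below `t` contain more than half of `S`, but those below each child of `t` contain at most
half of it. Deleting the bag of `t` leaves pieces, one for each child of `t` and one for the
rest of the tree, with no edges between distinct pieces and at most half of `S` in each. A
minimal union of pieces holding at least `k + 1` vertices of `S` holds at most `k + |S|/2` of
them, so as `|S| > 6k` the remaining pieces hold at least `|S| - k - (k + |S|/2) > k`.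
-/

open Finset

theorem exists_finset_le_sum_and_le_sum_compl {ι : Type*} [Fintype ι] [DecidableEq ι]
    (w : ι → ℕ) {k N : ℕ} (hN : 6 * k < N) (hw : ∀ i, 2 * w i ≤ N)
    (hsum : N ≤ ∑ i, w i + k) :
    ∃ T : Finset ι, k + 1 ≤ ∑ i ∈ T, w i ∧ k + 1 ≤ ∑ i ∈ Tᶜ, w i := by
  have hne : (univ.filter fun T : Finset ι => k + 1 ≤ ∑ i ∈ T, w i).Nonempty :=
    ⟨univ, (mem_filter_univ _).2 (by omega)⟩
  obtain ⟨T, hT, hTmin⟩ := exists_min_image _ card hne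
  rw [mem_filter_univ] at hT
  obtain ⟨i, hi⟩ : T.Nonempty := nonempty_of_sum_ne_zero (f := w) (by omega)
  have herase : ∑ j ∈ T.erase i, w j ≤ k := by
    by_contra! h
    have := hTmin (T.erase i) ((mem_filter_univ _).2 h)
    have := card_erase_lt_of_mem hi
    omega
  have := add_sum_erase T w hi
  have := sum_add_sum_compl T w
  exact ⟨T, hT, by have := hw i; omega⟩

section Labelling

variable {V : Type} {ι : Type*} [Fintype V] [DecidableEq V] [DecidableEq ι]
  {G : SimpleGraph V} {X : Finset V} {f : V → ι}

theorem isSeparation_union_filter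
    (hf : ∀ u v, u ∉ X → v ∉ X → G.Adj u v → f u = f v) (T : Finset ι) :
    IsSeparation G (X ∪ univ.filter fun v => f v ∈ T)
      (X ∪ univ.filter fun v => f v ∉ T) := by
  refine ⟨eq_univ_of_forall fun v => ?_, fun a ha ha' b hb hb' hab => ?_⟩
  · by_cases hv : f v ∈ T <;> simp [hv]
  · simp only [mem_union, mem_filter_univ, not_or, not_not] at ha ha' hb hb'
    exact hb'.2 (hf a b ha'.1 hb'.1 hab ▸ ha'.2)

theorem union_filter_inter_union_filter_subset (T : Finset ι) :
    (X ∪ univ.filter fun v => f v ∈ T) ∩ (X ∪ univ.filter fun v => f v ∉ T) ⊆ X := by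
  intro v
  simp only [mem_inter, mem_union, mem_filter_univ]
  tauto

theorem exists_separation_of_labelling [Fintype ι] {k : ℕ} (hX : #X ≤ k)
    (hf : ∀ u v, u ∉ X → v ∉ X → G.Adj u v → f u = f v) {S : Finset V} (hS : 6 * k < #S)
    (hw : ∀ i, 2 * #{v ∈ S | v ∉ X ∧ f v = i} ≤ #S) :
    ∃ L R : Finset V, L ⊆ S ∧ R ⊆ S ∧ Disjoint L R ∧
      L.card = k + 1 ∧ R.card = k + 1 ∧
      ∃ A B : Finset V, IsSeparation G A B ∧ (A ∩ B).card ≤ k ∧ L ⊆ A ∧ R ⊆ B := by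
  have hweight : ∀ T : Finset ι,
      #{v ∈ S | v ∉ X ∧ f v ∈ T} = ∑ i ∈ T, #{v ∈ S | v ∉ X ∧ f v = i} := by
    intro T
    rw [card_eq_sum_card_fiberwise (s := {v ∈ S | v ∉ X ∧ f v ∈ T}) (t := T) (f := f)
      fun v hv => (mem_filter.1 hv).2.2]
    refine sum_congr rfl fun i hi => congrArg card ?_
    ext v
    simp only [mem_filter]
    constructor
    · rintro ⟨⟨hvS, hvX, -⟩, rfl⟩
      exact ⟨hvS, hvX, rfl⟩
    · rintro ⟨hvS, hvX, rfl⟩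
      exact ⟨⟨hvS, hvX, hi⟩, rfl⟩
  have hsum : #S ≤ ∑ i, #{v ∈ S | v ∉ X ∧ f v = i} + k := by
    rw [← hweight]
    simp only [mem_univ, and_true]
    have := card_filter_add_card_filter_not (s := S) (· ∉ X)
    have : #(S.filter fun v => ¬v ∉ X) ≤ #X :=
      card_le_card fun v hv => by simpa using (mem_filter.1 hv).2
    omega
  obtain ⟨T, hT, hTc⟩ := exists_finset_le_sum_and_le_sum_compl _ hS hw hsum
  rw [← hweight] at hT hTc
  obtain ⟨L, hL, hLcard⟩ := exists_subset_card_eq hT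
  obtain ⟨R, hR, hRcard⟩ := exists_subset_card_eq hTc
  refine ⟨L, R, fun v hv => ?_, fun v hv => ?_, disjoint_left.2 fun v hvL hvR => ?_,
    hLcard, hRcard, _, _, isSeparation_union_filter hf T,
    (card_le_card (union_filter_inter_union_filter_subset T)).trans hX,
    fun v hv => ?_, fun v hv => ?_⟩
  · exact (mem_filter.1 (hL hv)).1
  · exact (mem_filter.1 (hR hv)).1
  · exact mem_compl.1 (mem_filter.1 (hR hvR)).2.2 (mem_filter.1 (hL hvL)).2.2
  · exact mem_union_right _ ((mem_filter_univ _).2 (mem_filter.1 (hL hv)).2.2)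
  · exact mem_union_right _ ((mem_filter_univ _).2 (mem_compl.1 (mem_filter.1 (hR hv)).2.2))

end Labelling

namespace RTDOn

variable {V : Type} [Fintype V] [DecidableEq V] {G : SimpleGraph V} {W : Finset V}

def IsChild (D : RTDOn V G W) (c t : D.ι) : Prop := D.parent c = t ∧ c ≠ t

open Classical in
noncomputable def descendants (D : RTDOn V G W) (t : D.ι) : Finset D.ι :=
  univ.filter fun s => ∃ n, D.parent^[n] s = t

theorem iterate_parent_root (D : RTDOn V G W) (n : ℕ) : D.parent^[n] D.root = D.root :=
  Function.iterate_fixed D.parent_root n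

section

variable {D : RTDOn V G W} {s t c : D.ι} {v : V}

theorem mem_descendants : s ∈ D.descendants t ↔ ∃ n, D.parent^[n] s = t := by
  simp [descendants]

theorem eq_root_of_iterate_parent_eq_self {n : ℕ} (hn : 0 < n) (h : D.parent^[n] t = t) :
    t = D.root := by
  obtain ⟨N, hN⟩ := D.reaches_root t
  have hcyc : D.parent^[n * N] t = t := by
    rw [Function.iterate_mul]
    exact Function.iterate_fixed h N
  rw [← hcyc, ← Nat.sub_add_cancel (Nat.le_mul_of_pos_left N hn), Function.iterate_add_apply,
    hN, D.iterate_parent_root]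

theorem IsChild.eq_of_iterate_parent {c' : D.ι} (hc : D.IsChild c t) (hc' : D.IsChild c' t)
    {n m : ℕ} (hn : D.parent^[n] s = c) (hm : D.parent^[m] s = c') : c = c' := by
  wlog hnm : n ≤ m generalizing c c' n m
  · exact (this hc' hc hm hn (by omega)).symm
  obtain ⟨d, rfl⟩ := Nat.exists_eq_add_of_le hnm
  rw [add_comm, Function.iterate_add_apply, hn] at hm
  cases d with
  | zero => exact hm
  | succ d =>
    rw [Function.iterate_succ_apply, hc.1] at hm
    have ht : t = D.root := eq_root_of_iterate_parent_eq_self d.succ_pos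
      (by rw [Function.iterate_succ_apply', hm, hc'.1])
    refine absurd ?_ hc'.2
    rw [← hm, ht, D.iterate_parent_root]

theorem IsChild.descendants_ssubset (hc : D.IsChild c t) : D.descendants c ⊂ D.descendants t := by
  refine ssubset_of_subset_of_ne (fun s hs => ?_) fun h => ?_
  · obtain ⟨n, hn⟩ := mem_descendants.1 hs
    exact mem_descendants.2 ⟨n + 1, by rw [Function.iterate_succ_apply', hn, hc.1]⟩
  · have htc : t ∈ D.descendants c := by
      rw [h]
      exact mem_descendants.2 ⟨0, rfl⟩
    obtain ⟨n, hn⟩ := mem_descendants.1 htc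
    have ht : t = D.root := eq_root_of_iterate_parent_eq_self n.succ_pos
      (by rw [Function.iterate_succ_apply', hn, hc.1])
    refine hc.2 ?_
    rw [← hn, ht, D.iterate_parent_root]

theorem exists_isChild_of_iterate_parent {n : ℕ} (h : D.parent^[n] s = t) (hst : s ≠ t) :
    ∃ c, D.IsChild c t ∧ ∃ m, D.parent^[m] s = c := by
  classical
  have hex : ∃ n, D.parent^[n] s = t := ⟨n, h⟩
  obtain ⟨m, hm⟩ : ∃ m, Nat.find hex = m + 1 :=
    Nat.exists_eq_succ_of_ne_zero fun h0 => hst (by simpa [h0] using Nat.find_spec hex)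
  refine ⟨D.parent^[m] s, ⟨?_, Nat.find_min hex (by omega)⟩, m, rfl⟩
  have := Nat.find_spec hex
  rwa [hm, Function.iterate_succ_apply'] at this

theorem exists_isChild_mem_gammaSet (hv : v ∈ D.gammaSet t) (hvt : v ∉ D.bag t) :
    ∃ c, D.IsChild c t ∧ v ∈ D.gammaSet c := by
  obtain ⟨s, ⟨n, hn⟩, hvs⟩ := hv
  obtain ⟨c, hc, hsc⟩ := exists_isChild_of_iterate_parent hn (by rintro rfl; exact hvt hvs)
  exact ⟨c, hc, s, hsc, hvs⟩

-- The nodes whose bags contain `v` form a subtree avoiding `t`, so it stays in the branch at `c`.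
theorem iterate_parent_eq_of_mem_bag (hvt : v ∉ D.bag t) (hc : D.IsChild c t)
    (hvc : v ∈ D.gammaSet c) (hvs : v ∈ D.bag s) : ∃ n, D.parent^[n] s = c := by
  obtain ⟨s₀, hs₀, hvs₀⟩ := hvc
  obtain ⟨p⟩ :=
    (D.bags_connected v (D.bag_subset s hvs)).preconnected ⟨s₀, hvs₀⟩ ⟨s, hvs⟩
  by_contra hs
  obtain ⟨⟨⟨x, y⟩, hxy⟩, -, hx, hy⟩ :=
    p.exists_boundary_dart {x | ∃ n, D.parent^[n] x.1 = c} hs₀ hs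
  simp only [SimpleGraph.comap_adj, Function.Embedding.subtype_apply,
    SimpleGraph.fromRel_adj] at hxy
  obtain ⟨n, hn⟩ := hx
  refine hy ?_
  rcases hxy.2 with hxy | hyx
  · cases n with
    | zero =>
      have hyt : (y : D.ι) = t := by rw [← hxy, ← hc.1, ← hn]; rfl
      exact absurd (hyt ▸ y.2) hvt
    | succ n => exact ⟨n, by rwa [Function.iterate_succ_apply, hxy] at hn⟩
  · exact ⟨n + 1, by rw [Function.iterate_succ_apply, hyx, hn]⟩

-- Deleting `bag t` leaves one piece for each child of `t` and one, labelled `t`, for the rest.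
open Classical in
noncomputable def childLabel (D : RTDOn V G W) (t : D.ι) (v : V) : D.ι :=
  if h : ∃ c, D.IsChild c t ∧ v ∈ D.gammaSet c then h.choose else t

theorem childLabel_spec (h : ∃ c, D.IsChild c t ∧ v ∈ D.gammaSet c) :
    D.IsChild (D.childLabel t v) t ∧ v ∈ D.gammaSet (D.childLabel t v) := by
  rw [childLabel, dif_pos h]
  exact h.choose_spec

theorem childLabel_of_not (h : ¬∃ c, D.IsChild c t ∧ v ∈ D.gammaSet c) :
    D.childLabel t v = t :=
  dif_neg h

theorem childLabel_eq (hvt : v ∉ D.bag t) (hc : D.IsChild c t) (hvc : v ∈ D.gammaSet c) :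
    D.childLabel t v = c := by
  obtain ⟨hc', hvc'⟩ := childLabel_spec ⟨c, hc, hvc⟩
  obtain ⟨s, ⟨n, hn⟩, hvs⟩ := hvc
  obtain ⟨m, hm⟩ := iterate_parent_eq_of_mem_bag hvt hc' hvc' hvs
  exact hc'.eq_of_iterate_parent hc hm hn

open Classical in
theorem two_mul_card_filter_childLabel_le {S : Finset V}
    (hheavy : #S < 2 * #{v ∈ S | v ∈ D.gammaSet t})
    (hlight : ∀ c, D.IsChild c t → 2 * #{v ∈ S | v ∈ D.gammaSet c} ≤ #S) (i : D.ι) :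
    2 * #{v ∈ S | v ∉ D.bag t ∧ D.childLabel t v = i} ≤ #S := by
  by_cases hi : D.IsChild i t
  · refine le_trans (Nat.mul_le_mul_left 2 (card_le_card fun v => ?_)) (hlight i hi)
    simp only [mem_filter]
    rintro ⟨hvS, -, rfl⟩
    by_cases h : ∃ c, D.IsChild c t ∧ v ∈ D.gammaSet c
    · exact ⟨hvS, (childLabel_spec h).2⟩
    · exact absurd (childLabel_of_not h) hi.2
  · have hsub :
        {v ∈ S | v ∉ D.bag t ∧ D.childLabel t v = i} ⊆ {v ∈ S | v ∉ D.gammaSet t} := by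
      intro v
      simp only [mem_filter]
      rintro ⟨hvS, hvt, rfl⟩
      exact ⟨hvS, fun hv => hi (childLabel_spec (exists_isChild_mem_gammaSet hv hvt)).1⟩
    have := card_filter_add_card_filter_not (s := S) (· ∈ D.gammaSet t)
    have := card_le_card hsub
    omega

end

section

variable {D : RTD V G} {t c : D.ι} {u v : V}

theorem mem_gammaSet_root (v : V) : v ∈ D.gammaSet D.root := by
  obtain ⟨⟨s, hvs⟩⟩ := (D.bags_connected v (mem_univ v)).nonempty
  exact ⟨s, D.reaches_root s, hvs⟩

theorem mem_gammaSet_of_adj (hut : u ∉ D.bag t) (hc : D.IsChild c t) (huc : u ∈ D.gammaSet c)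
    (huv : G.Adj u v) : v ∈ D.gammaSet c := by
  obtain ⟨s, hus, hvs⟩ := D.edge_in_bag u (mem_univ u) v (mem_univ v) huv
  exact ⟨s, iterate_parent_eq_of_mem_bag hut hc huc hus, hvs⟩

theorem childLabel_eq_of_adj (hut : u ∉ D.bag t) (hvt : v ∉ D.bag t) (huv : G.Adj u v) :
    D.childLabel t u = D.childLabel t v := by
  by_cases hu : ∃ c, D.IsChild c t ∧ u ∈ D.gammaSet c
  · obtain ⟨c, hc, huc⟩ := hu
    rw [childLabel_eq hut hc huc, childLabel_eq hvt hc (mem_gammaSet_of_adj hut hc huc huv)]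
  · have hv : ¬∃ c, D.IsChild c t ∧ v ∈ D.gammaSet c := fun ⟨c, hc, hvc⟩ =>
      hu ⟨c, hc, mem_gammaSet_of_adj hvt hc hvc huv.symm⟩
    rw [childLabel_of_not hu, childLabel_of_not hv]

open Classical in
theorem exists_heavy_node_light_children (D : RTD V G) {S : Finset V} (hS : S.Nonempty) :
    ∃ t, #S < 2 * #{v ∈ S | v ∈ D.gammaSet t} ∧
      ∀ c, D.IsChild c t → 2 * #{v ∈ S | v ∈ D.gammaSet c} ≤ #S := by
  have hroot : D.root ∈ univ.filter fun t => #S < 2 * #{v ∈ S | v ∈ D.gammaSet t} := by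
    rw [mem_filter_univ, filter_true_of_mem fun v _ => mem_gammaSet_root v]
    have := hS.card_pos
    omega
  obtain ⟨t, ht, hmin⟩ := exists_min_image _ (fun t => #(D.descendants t)) ⟨_, hroot⟩
  refine ⟨t, (mem_filter.1 ht).2, fun c hc => ?_⟩
  by_contra! h
  exact (hmin c ((mem_filter_univ _).2 h)).not_gt (card_lt_card hc.descendants_ssubset)

end

end RTDOn

namespace RTD

variable {V : Type} [Fintype V] [DecidableEq V]

def singleBag (G : SimpleGraph V) : RTD V G where
  ι := Unit
  instFintype := inferInstance
  instDecEq := inferInstance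
  root := ()
  parent := id
  parent_root := rfl
  reaches_root _ := ⟨0, rfl⟩
  bag _ := univ
  bag_subset _ := Subset.refl _
  bags_connected v _ := by
    rw [SimpleGraph.connected_iff]
    refine ⟨fun a b => ?_, ⟨⟨(), mem_univ v⟩⟩⟩
    rw [Subsingleton.elim a b]
  edge_in_bag u _ v _ _ := ⟨(), mem_univ u, mem_univ v⟩

theorem exists_widthLe_treewidth (G : SimpleGraph V) : ∃ D : RTD V G, D.widthLe (treewidth G) :=
  Nat.sInf_mem (s := {w | ∃ D : RTD V G, D.widthLe w})
    ⟨Fintype.card V, singleBag G, fun _ => Nat.le_succ _⟩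

end RTD

theorem stmt14_general {V : Type} [Fintype V] [DecidableEq V] (k : ℕ)
    (G : SimpleGraph V) (htw : treewidth G < k) (S : Finset V) (hS : 6 * k < S.card) :
    ∃ L R : Finset V, L ⊆ S ∧ R ⊆ S ∧ Disjoint L R ∧
      L.card = k + 1 ∧ R.card = k + 1 ∧
      ∃ A B : Finset V, IsSeparation G A B ∧ (A ∩ B).card ≤ k ∧ L ⊆ A ∧ R ⊆ B := by
  obtain ⟨D, hD⟩ := RTD.exists_widthLe_treewidth G
  obtain ⟨t, hheavy, hlight⟩ :=
    D.exists_heavy_node_light_children (card_pos.1 (by omega : 0 < #S))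
  exact exists_separation_of_labelling ((hD t).trans (by omega))
    (fun _ _ => RTDOn.childLabel_eq_of_adj) hS
    (RTDOn.two_mul_card_filter_childLabel_le hheavy hlight)

/-- In a graph of treewidth `< k`, any set `S` with `|S| > 6k` contains
disjoint subsets `L, R` of size `k+1` separated by a separation of order at most `k`. -/
theorem stmt14 {V : Type} [Fintype V] [DecidableEq V] (k : ℕ) (hk : 0 < k)
    (G : SimpleGraph V) (htw : treewidth G < k) (S : Finset V) (hS : 6 * k < S.card) :
    ∃ L R : Finset V, L ⊆ S ∧ R ⊆ S ∧ Disjoint L R ∧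
      L.card = k + 1 ∧ R.card = k + 1 ∧
      ∃ A B : Finset V, IsSeparation G A B ∧ (A ∩ B).card ≤ k ∧ L ⊆ A ∧ R ⊆ B :=
  stmt14_general k G htw S hS
end
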